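/- arXiv:2207.03897 — 7 statements merged into one kernel-verified Lean document; each statement's English description precedes it below -/
import Mathlib

section
/- Let f : U → V be a C¹ map between open subsets U ⊆ ℝⁿ and V ⊆ ℝᵖ. If there exists a bi-Lipschitz homeomorphism of the form (f, ψ) : U → V × F, where F is a C¹ submanifold of some ℝ^q, then f has no critical points in U, i.e., the differential of f has rank p at every point of U. -/
/-!
Freezing the second component at `(G x).2`, the map `y ↦ G⁻¹ (y, (G x).2)` is a right inverse
of `f` on `V` moving points by at most `K'` times the distance of their images. If `Df(x)`
missed a direction, Riesz's lemma gives a unit vector `v` at distance `≥ 1/2` from its range;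
the preimages `u` of `f x + t • v` then satisfy `‖u - x‖ = O(t)` while
`‖f u - f x - Df(x) (u - x)‖ ≥ t / 2`, contradicting differentiability as `t → 0⁺`.
-/

/-- `F` is a `C¹` submanifold of dimension `m` of `ℝ^q`: near each of its points there is a
`C¹` chart of the ambient space straightening `F` onto the coordinate subspace of the
first `m` coordinates. -/
def IsC1Submanifold {q : ℕ} (F : Set (EuclideanSpace ℝ (Fin q))) (m : ℕ) : Prop :=
  ∀ y ∈ F, ∃ φ : PartialHomeomorph (EuclideanSpace ℝ (Fin q)) (EuclideanSpace ℝ (Fin q)),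
    y ∈ φ.source ∧ ContDiffOn ℝ 1 φ φ.source ∧ ContDiffOn ℝ 1 φ.symm φ.target ∧
    φ.source ∩ F = φ.source ∩ φ ⁻¹' {z : EuclideanSpace ℝ (Fin q) | ∀ i : Fin q, m ≤ (i : ℕ) → z i = 0}

open Filter Topology

theorem exists_preimage_dist_le_of_lipschitzWith_symm {E F Z : Type*} [PseudoMetricSpace E]
    [PseudoMetricSpace F] [PseudoMetricSpace Z] {U : Set E} {V : Set F} {f : E → F}
    (G : U ≃ V × Z) (hG : ∀ x : U, ((G x).1 : F) = f x) {K : NNReal}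
    (hG' : LipschitzWith K G.symm) (x : U) :
    ∀ y ∈ V, ∃ u, f u = y ∧ dist u x ≤ K * dist y (f x) := by
  intro y hy
  set a : V × Z := (⟨y, hy⟩, (G x).2)
  refine ⟨G.symm a, by rw [← hG, G.apply_symm_apply], ?_⟩
  calc dist (G.symm a : E) x = dist (G.symm a) (G.symm (G x)) := by
        rw [G.symm_apply_apply, Subtype.dist_eq]
    _ ≤ K * dist a (G x) := hG'.dist_le_mul _ _
    _ = K * dist y (f x) := by
        rw [Prod.dist_eq, dist_self, Subtype.dist_eq, hG,
          max_eq_left dist_nonneg]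

theorem ContinuousLinearMap.exists_norm_eq_one_forall_half_le_norm_sub {E F : Type*}
    [NormedAddCommGroup E] [NormedSpace ℝ E] [NormedAddCommGroup F] [NormedSpace ℝ F]
    [FiniteDimensional ℝ F] {T : E →L[ℝ] F} (hT : ¬Function.Surjective T) :
    ∃ v : F, ‖v‖ = 1 ∧ ∀ w, 1 / 2 ≤ ‖v - T w‖ := by
  obtain ⟨v, -, hv1, hv⟩ := riesz_lemma_of_lt_one (𝕜 := ℝ)
    (LinearMap.range (T : E →ₗ[ℝ] F)).closed_of_finiteDimensional
    (by simpa [Function.Surjective] using hT) (r := 1 / 2) (by norm_num)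
  exact ⟨v, hv1, fun w => hv _ (LinearMap.mem_range_self (T : E →ₗ[ℝ] F) w)⟩

theorem HasFDerivAt.surjective_of_exists_preimage_dist_le {E F : Type*}
    [NormedAddCommGroup E] [NormedSpace ℝ E] [NormedAddCommGroup F] [NormedSpace ℝ F]
    [FiniteDimensional ℝ F] {f : E → F} {f' : E →L[ℝ] F} {x : E} (hf : HasFDerivAt f f' x)
    {C : NNReal} (h : ∀ᶠ y in 𝓝 (f x), ∃ u, f u = y ∧ dist u x ≤ C * dist y (f x)) :
    Function.Surjective f' := by
  by_contra hs
  obtain ⟨v, hv1, hv⟩ := f'.exists_norm_eq_one_forall_half_le_norm_sub hs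
  set ε : ℝ := (2 * C + 1)⁻¹
  have hε : 0 < ε := by positivity
  have hεC : ε * C < 1 / 2 := by
    have : ε * (2 * C + 1) = 1 := inv_mul_cancel₀ (by positivity)
    linarith
  obtain ⟨δ, hδ, hlo⟩ := Metric.eventually_nhds_iff.mp (hf.isLittleO.def hε)
  have hray : Tendsto (fun t : ℝ => f x + t • v) (𝓝[>] 0) (𝓝 (f x)) :=
    tendsto_nhdsWithin_of_tendsto_nhds
      ((continuous_const.add (continuous_id.smul continuous_const)).tendsto' _ _ (by simp))
  have hsmall : ∀ᶠ t in 𝓝[>] (0 : ℝ), C * t < δ :=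
    tendsto_nhdsWithin_of_tendsto_nhds
      ((continuous_const.mul continuous_id).tendsto' 0 0 (by simp)) |>.eventually
      (gt_mem_nhds hδ)
  obtain ⟨t, ⟨⟨u, hfu, hux⟩, htδ⟩, ht : 0 < t⟩ :=
    ((hray.eventually h).and hsmall).and self_mem_nhdsWithin |>.exists
  rw [dist_eq_norm, dist_eq_norm, add_sub_cancel_left, norm_smul, hv1, mul_one,
    Real.norm_of_nonneg ht.le] at hux
  have hupper : ‖f u - f x - f' (u - x)‖ ≤ ε * ‖u - x‖ :=
    hlo (by rw [dist_eq_norm]; linarith)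
  have hlower : t / 2 ≤ ‖f u - f x - f' (u - x)‖ :=
    calc t / 2 ≤ t * ‖v - f' (t⁻¹ • (u - x))‖ := by nlinarith [hv (t⁻¹ • (u - x))]
      _ = ‖t • (v - f' (t⁻¹ • (u - x)))‖ := by rw [norm_smul, Real.norm_of_nonneg ht.le]
      _ = ‖f u - f x - f' (u - x)‖ := by
        rw [hfu, add_sub_cancel_left, smul_sub, map_smul, smul_inv_smul₀ ht.ne']
  nlinarith [mul_le_mul_of_nonneg_left hux hε.le]

theorem stmt_2_general {n p q : ℕ}
    (U : Set (EuclideanSpace ℝ (Fin n))) (hU : IsOpen U)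
    (V : Set (EuclideanSpace ℝ (Fin p))) (hV : IsOpen V)
    (F : Set (EuclideanSpace ℝ (Fin q)))
    (f : EuclideanSpace ℝ (Fin n) → EuclideanSpace ℝ (Fin p))
    (ψ : EuclideanSpace ℝ (Fin n) → EuclideanSpace ℝ (Fin q))
    (hf : ContDiffOn ℝ 1 f U)
    (G : ↥U ≃ ↥V × ↥F)
    (hGdef : ∀ x : ↥U, ((G x).1 : EuclideanSpace ℝ (Fin p)) = f x ∧
      ((G x).2 : EuclideanSpace ℝ (Fin q)) = ψ x)
    (K' : NNReal) (hG' : LipschitzWith K' G.symm) :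
    ∀ x ∈ U, Function.Surjective (fderiv ℝ f x) := by
  intro x hx
  have hfx : f x ∈ V := (hGdef ⟨x, hx⟩).1 ▸ (G ⟨x, hx⟩).1.2
  have hdiff : DifferentiableAt ℝ f x :=
    (hf.contDiffAt (hU.mem_nhds hx)).differentiableAt one_ne_zero
  refine hdiff.hasFDerivAt.surjective_of_exists_preimage_dist_le (C := K') ?_
  filter_upwards [hV.mem_nhds hfx] with y hy
  exact exists_preimage_dist_le_of_lipschitzWith_symm G (fun x => (hGdef x).1) hG' ⟨x, hx⟩ y hy

/-- if `(f, ψ) : U → V × F` is a bi-Lipschitz homeomorphism with `f` of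
class `C¹`, then `f` has no critical point in `U`. -/
theorem stmt_2 {n p q m : ℕ}
    (U : Set (EuclideanSpace ℝ (Fin n))) (hU : IsOpen U)
    (V : Set (EuclideanSpace ℝ (Fin p))) (hV : IsOpen V)
    (F : Set (EuclideanSpace ℝ (Fin q))) (hF : IsC1Submanifold F m)
    (f : EuclideanSpace ℝ (Fin n) → EuclideanSpace ℝ (Fin p))
    (ψ : EuclideanSpace ℝ (Fin n) → EuclideanSpace ℝ (Fin q))
    (hf : ContDiffOn ℝ 1 f U)
    (hfV : Set.MapsTo f U V) (hψF : Set.MapsTo ψ U F)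
    (G : ↥U ≃ ↥V × ↥F)
    (hGdef : ∀ x : ↥U, ((G x).1 : EuclideanSpace ℝ (Fin p)) = f x ∧
      ((G x).2 : EuclideanSpace ℝ (Fin q)) = ψ x)
    (K K' : NNReal) (hG : LipschitzWith K G) (hG' : LipschitzWith K' G.symm) :
    ∀ x ∈ U, Function.Surjective (fderiv ℝ f x) :=
  stmt_2_general U hU V hV F f ψ hf G hGdef K' hG'
end

section
/- Let φ : ℝⁿ → ℝᵖ be a smooth map whose set of critical values is nowhere dense. If c ∈ ℝᵖ is a regular value of φ and φ is proper over some neighbourhood of c (i.e., there is a neighbourhood 𝒱 of c such that φ restricted to φ⁻¹(𝒱) is proper), then c is a Lipschitz trivial value of φ. -/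
/-- `c` is a Lipschitz trivial value of `f`: there is a neighbourhood `V` of `c` and a
bi-Lipschitz homeomorphism `H : f⁻¹(c) × V ≃ f⁻¹(V)` (outer metrics, product metric)
with `f ∘ H = projection onto V`. -/
def LipTrivAt {E F : Type*} [MetricSpace E] [MetricSpace F] (f : E → F) (c : F) : Prop :=
  ∃ V : Set F, IsOpen V ∧ c ∈ V ∧
    ∃ (H : ↥(f ⁻¹' {c}) × ↥V ≃ ↥(f ⁻¹' V)) (K K' : NNReal),
      LipschitzWith K H ∧ LipschitzWith K' H.symm ∧
      ∀ z : ↥(f ⁻¹' {c}) × ↥V, f (H z : E) = (z.2 : F)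

open ContinuousLinearMap Set Metric Real RealInnerProductSpace
open scoped ContDiff

section Aux

variable {E F : Type*} [NormedAddCommGroup E] [InnerProductSpace ℝ E]
  [NormedAddCommGroup F] [InnerProductSpace ℝ F]
  [FiniteDimensional ℝ E] [FiniteDimensional ℝ F]

lemma isUnit_comp_adjoint (A : E →L[ℝ] F) (hA : Function.Surjective A) :
    IsUnit (A ∘L (ContinuousLinearMap.adjoint A)) := by
  set B := A ∘L (ContinuousLinearMap.adjoint A) with hB
  have key : ∀ u, B u = 0 → u = 0 := by
    intro u hu
    have h1 : ContinuousLinearMap.adjoint A u = 0 := by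
      have : ⟪ContinuousLinearMap.adjoint A u, ContinuousLinearMap.adjoint A u⟫ = 0 := by
        rw [ContinuousLinearMap.adjoint_inner_left]
        simp only [hB, ContinuousLinearMap.comp_apply] at hu
        rw [hu, inner_zero_right]
      exact inner_self_eq_zero.mp this
    have hall : ∀ w, ⟪u, w⟫ = 0 := by
      intro w
      obtain ⟨z, rfl⟩ := hA w
      rw [← ContinuousLinearMap.adjoint_inner_left, h1, inner_zero_left]
    exact inner_self_eq_zero.mp (hall u)
  have hinj : Function.Injective B := by
    intro v w hvw
    have : B (v - w) = 0 := by rw [map_sub, hvw, sub_self]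
    exact sub_eq_zero.mp (key _ this)
  have hbij : Function.Bijective (B : F →ₗ[ℝ] F) :=
    ⟨hinj, (LinearMap.injective_iff_surjective).mp hinj⟩
  let e : F ≃ₗ[ℝ] F := LinearEquiv.ofBijective (B : F →ₗ[ℝ] F) hbij
  let e' : F ≃L[ℝ] F := e.toContinuousLinearEquiv
  refine ⟨⟨B, (e'.symm : F →L[ℝ] F), ?_, ?_⟩, rfl⟩
  · ext z
    have : e (e'.symm z) = z := e'.apply_symm_apply z
    have h2 : B (e'.symm z) = z := this
    simpa using h2
  · ext z
    have : e'.symm (e z) = z := e'.symm_apply_apply z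
    have h2 : e'.symm (B z) = z := this
    simpa using h2

lemma contDiff_adjoint :
    ContDiff ℝ ∞ (fun A : E →L[ℝ] F => ContinuousLinearMap.adjoint A) := by
  have h : IsBoundedLinearMap ℝ (fun A : E →L[ℝ] F => ContinuousLinearMap.adjoint A) := by
    refine ⟨⟨fun A B => ?_, fun r A => ?_⟩, 1, one_pos, fun A => ?_⟩
    · exact map_add _ A B
    · simp
    · simp [LinearIsometryEquiv.norm_map]
  exact h.contDiff

set_option maxHeartbeats 2000000 in
theorem lipTrivAt_aux (φ : E → F) (hφ : ContDiff ℝ (⊤ : ℕ∞) φ)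
    (c : F)
    (hreg : ∀ x, φ x = c → Function.Surjective (fderiv ℝ φ x))
    (hproper : ∃ V : Set F, IsOpen V ∧ c ∈ V ∧
      ∀ K : Set F, K ⊆ V → IsCompact K → IsCompact (φ ⁻¹' K)) : LipTrivAt φ c := by
  classical
  set A : E → (E →L[ℝ] F) := fderiv ℝ φ with hAdef
  have hA : ContDiff ℝ ∞ A := hφ.fderiv_right ((by simp))
  set Bm : E → (F →L[ℝ] F) := fun x => (A x) ∘L (ContinuousLinearMap.adjoint (A x)) with hBdef
  have hadj : ContDiff ℝ ∞ (fun x => ContinuousLinearMap.adjoint (A x)) :=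
    contDiff_adjoint.comp hA
  have hBcont : ContDiff ℝ ∞ Bm := hA.clm_comp hadj
  set U : Set E := {x | IsUnit (Bm x)} with hUdef
  have hUopen : IsOpen U := Units.isOpen.preimage hBcont.continuous
  set σ : E → (F →L[ℝ] E) :=
    fun x => (ContinuousLinearMap.adjoint (A x)) ∘L (Ring.inverse (Bm x)) with hσdef
  have hσU : ∀ x ∈ U, ContDiffAt ℝ ∞ σ x := by
    intro x hx
    have hinv : ContDiffAt ℝ ∞ Ring.inverse (Bm x) := by
      have := contDiffAt_ringInverse ℝ (n := ∞) hx.unit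
      rwa [IsUnit.unit_spec] at this
    exact hadj.contDiffAt.clm_comp (hinv.comp x hBcont.contDiffAt)
  have hsec : ∀ x ∈ U, ∀ z, A x (σ x z) = z := by
    intro x hx z
    have h1 : Bm x * Ring.inverse (Bm x) = 1 := Ring.mul_inverse_cancel _ hx
    have : (Bm x * Ring.inverse (Bm x)) z = z := by rw [h1]; rfl
    simpa [hσdef, hBdef, ContinuousLinearMap.mul_apply] using this
  have hfiberU : ∀ x, φ x = c → x ∈ U := fun x hx => isUnit_comp_adjoint _ (hreg x hx)
  -- chunk2: radii and cutoff
  obtain ⟨V₀, hV₀open, hcV₀, hprop⟩ := hproper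
  obtain ⟨r₀, hr₀pos, hballV₀⟩ := Metric.isOpen_iff.mp hV₀open c hcV₀
  have hcbV₀ : closedBall c (r₀ / 2) ⊆ V₀ :=
    (closedBall_subset_ball (by linarith)).trans hballV₀
  have hK₀ : IsCompact (φ ⁻¹' closedBall c (r₀ / 2)) :=
    hprop _ hcbV₀ (isCompact_closedBall _ _)
  -- find radius ρ with preimage of closedBall c ρ inside U
  have hUc : IsClosed Uᶜ := hUopen.isClosed_compl
  have hS : IsCompact (φ '' (Uᶜ ∩ φ ⁻¹' closedBall c (r₀ / 2))) :=
    (hK₀.inter_left hUc).image hφ.continuous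
  have hcS : c ∉ φ '' (Uᶜ ∩ φ ⁻¹' closedBall c (r₀ / 2)) := by
    rintro ⟨x, ⟨hxU, -⟩, hxc⟩
    exact hxU (hfiberU x hxc)
  obtain ⟨ρ₁, hρ₁pos, hρ₁⟩ : ∃ ρ₁ > 0, ball c ρ₁ ⊆ (φ '' (Uᶜ ∩ φ ⁻¹' closedBall c (r₀ / 2)))ᶜ :=
    Metric.isOpen_iff.mp hS.isClosed.isOpen_compl c hcS
  set r : ℝ := min (ρ₁ / 2) (r₀ / 2) / 2 with hrdef
  have hrpos : 0 < r := by positivity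
  have h2r : 2 * r ≤ r₀ / 2 := by
    have := min_le_right (ρ₁ / 2) (r₀ / 2); simp only [hrdef]; linarith
  have h2rρ : 2 * r < ρ₁ := by
    have := min_le_left (ρ₁ / 2) (r₀ / 2); simp only [hrdef]; linarith
  have hK2U : φ ⁻¹' closedBall c (2 * r) ⊆ U := by
    intro x hx
    by_contra hxU
    have hx₀ : x ∈ φ ⁻¹' closedBall c (r₀ / 2) := (closedBall_subset_closedBall h2r) hx
    have : φ x ∈ φ '' (Uᶜ ∩ φ ⁻¹' closedBall c (r₀ / 2)) := ⟨x, ⟨hxU, hx₀⟩, rfl⟩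
    exact hρ₁ (lt_of_le_of_lt (mem_closedBall.mp hx) h2rρ) this
  have hK2cpt : IsCompact (φ ⁻¹' closedBall c (2 * r)) :=
    hprop _ ((closedBall_subset_closedBall h2r).trans hcbV₀) (isCompact_closedBall _ _)
  set K2 : Set E := φ ⁻¹' closedBall c (2 * r) with hK2def
  -- bump function
  obtain ⟨R, hRpos, hK2R⟩ : ∃ R, 0 < R ∧ K2 ⊆ closedBall 0 R := by
    obtain ⟨R, hR, h⟩ := hK2cpt.isBounded.subset_closedBall_lt 0 0
    exact ⟨R, hR, h⟩
  set bump : ContDiffBump (0 : E) := ⟨R, 2 * R, hRpos, by linarith⟩ with hbumpdef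
  -- smooth 0-1 function
  obtain ⟨f₀, hf₀0, hf₀1, hf₀mem⟩ :=
    exists_contMDiffMap_zero_one_of_isClosed (n := (⊤ : ℕ∞)) (modelWithCornersSelf ℝ E) hUc hK2cpt.isClosed
      (disjoint_compl_left_iff.mpr hK2U)
  have hf₀sm : ContDiff ℝ ∞ (f₀ : E → ℝ) := by
    exact contMDiff_iff_contDiff.mp f₀.contMDiff
  set χ : E → ℝ := fun x => smoothTransition (2 * f₀ x - 1) * bump x with hχdef
  have hχsm : ContDiff ℝ ∞ χ :=
    (smoothTransition.contDiff.comp (((contDiff_const.mul hf₀sm).sub contDiff_const))).mul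
      bump.contDiff
  have hχ1 : ∀ x ∈ K2, χ x = 1 := by
    intro x hx
    have h1 : f₀ x = 1 := hf₀1 hx
    have h2 : bump x = 1 := bump.one_of_mem_closedBall (hK2R hx)
    simp only [hχdef, h1, h2, mul_one]
    norm_num [smoothTransition.one]
  have hχ01 : ∀ x, χ x ∈ Icc (0:ℝ) 1 := by
    intro x
    constructor
    · exact mul_nonneg (smoothTransition.nonneg _) bump.nonneg
    · exact mul_le_one₀ (smoothTransition.le_one _) bump.nonneg bump.le_one
  have hχU : tsupport χ ⊆ U := by
    have h1 : tsupport χ ⊆ {x | (1:ℝ)/2 ≤ f₀ x} := by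
      apply closure_minimal _ (isClosed_le continuous_const hf₀sm.continuous)
      intro x hx
      simp only [Function.mem_support, hχdef] at hx
      by_contra hlt
      simp only [mem_setOf_eq, not_le] at hlt
      have : smoothTransition (2 * f₀ x - 1) = 0 :=
        smoothTransition.zero_of_nonpos (by simp at hlt ⊢; linarith)
      simp [this] at hx
    intro x hx
    by_contra hxU
    have h0 : f₀ x = 0 := hf₀0 hxU
    have h2 := h1 hx
    simp only [mem_setOf_eq, h0] at h2
    norm_num at h2
  have hχcpt : HasCompactSupport χ := by
    apply HasCompactSupport.intro (isCompact_closedBall (0:E) (2*R))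
    intro x hx
    have : bump x = 0 := by
      rw [← Function.notMem_support, bump.support_eq]
      simpa using fun h => hx (ball_subset_closedBall h)
    simp [hχdef, this]
  -- chunk3 : the vector field Y and its properties
  set Y : E → (F →L[ℝ] E) := fun x => χ x • σ x with hYdef
  have hYsm : ContDiff ℝ ∞ Y := by
    rw [contDiff_iff_contDiffAt]
    intro x
    by_cases hx : x ∈ U
    · exact hχsm.contDiffAt.smul (hσU x hx)
    · have hx' : x ∉ tsupport χ := fun h => hx (hχU h)
      have hopen : IsOpen (tsupport χ)ᶜ := (isClosed_tsupport χ).isOpen_compl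
      have hev : Y =ᶠ[nhds x] (fun _ => (0 : F →L[ℝ] E)) := by
        filter_upwards [hopen.mem_nhds hx'] with y hy
        have : χ y = 0 := image_eq_zero_of_notMem_tsupport hy
        simp [hYdef, this]
      exact (contDiffAt_const (c := (0 : F →L[ℝ] E))).congr_of_eventuallyEq hev
  have hYcpt : HasCompactSupport Y := by
    apply HasCompactSupport.intro (isCompact_closedBall (0:E) (2*R))
    intro x hx
    have hb : (bump : E → ℝ) x = 0 := by
      rw [← Function.notMem_support, bump.support_eq]
      simpa using fun h => hx (ball_subset_closedBall h)
    simp [hYdef, hχdef, hb]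
  obtain ⟨Lc, hLc⟩ := hYsm.lipschitzWith_of_hasCompactSupport hYcpt (by norm_num)
  obtain ⟨M, hM⟩ := hYcpt.exists_bound_of_continuous hYsm.continuous
  have hM0 : 0 ≤ M := le_trans (norm_nonneg (Y 0)) (hM 0)
  -- Lipschitz bound for φ on K2
  set g : E → F := fun x => χ x • (φ x - c) with hgdef
  have hgsm : ContDiff ℝ ∞ g := hχsm.smul ((hφ.of_le (by simp)).sub contDiff_const)
  have hgcpt : HasCompactSupport g := by
    apply HasCompactSupport.intro (isCompact_closedBall (0:E) (2*R))
    intro x hx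
    have hb : (bump : E → ℝ) x = 0 := by
      rw [← Function.notMem_support, bump.support_eq]
      simpa using fun h => hx (ball_subset_closedBall h)
    simp [hgdef, hχdef, hb]
  obtain ⟨Lφ, hLφ⟩ := hgsm.lipschitzWith_of_hasCompactSupport hgcpt (by norm_num)
  have hφLip : ∀ x ∈ K2, ∀ y ∈ K2, dist (φ x) (φ y) ≤ Lφ * dist x y := by
    intro x hx y hy
    have h1 : φ x - c = g x := by simp [hgdef, hχ1 x hx]
    have h2 : φ y - c = g y := by simp [hgdef, hχ1 y hy]
    calc dist (φ x) (φ y) = dist (φ x - c) (φ y - c) := (dist_sub_right _ _ _).symm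
      _ = dist (g x) (g y) := by rw [h1, h2]
      _ ≤ Lφ * dist x y := hLφ.dist_le_mul x y
  -- chunk4 : flow existence
  have hfield_lip : ∀ v : F, LipschitzWith (Lc * ‖v - c‖₊) (fun x => Y x (v - c)) := by
    intro v
    apply LipschitzWith.of_dist_le_mul
    intro x y
    have h1 : Y x (v - c) - Y y (v - c) = (Y x - Y y) (v - c) := by simp
    calc dist (Y x (v - c)) (Y y (v - c)) = ‖(Y x - Y y) (v - c)‖ := by
          rw [dist_eq_norm, h1]
      _ ≤ ‖Y x - Y y‖ * ‖v - c‖ := (Y x - Y y).le_opNorm _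
      _ ≤ (Lc * dist x y) * ‖v - c‖ := by
          apply mul_le_mul_of_nonneg_right _ (norm_nonneg _)
          rw [← dist_eq_norm]; exact hLc.dist_le_mul x y
      _ = ↑(Lc * ‖v - c‖₊) * dist x y := by push_cast; ring
  have hfield_bd : ∀ v : F, ∀ x, ‖Y x (v - c)‖ ≤ M * ‖v - c‖ :=
    fun v x => le_trans ((Y x).le_opNorm _)
      (mul_le_mul_of_nonneg_right (hM x) (norm_nonneg _))
  have hex : ∀ (x₀ : E) (v : F), ∃ f : ℝ → E, f 0 = x₀ ∧
      ∀ t ∈ Icc (0:ℝ) 1, HasDerivWithinAt f (Y (f t) (v - c)) (Icc (0:ℝ) 1) t := by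
    intro x₀ v
    have hpl : IsPicardLindelof (fun _ x => Y x (v - c)) (tmin := 0) (tmax := 1)
        ⟨0, left_mem_Icc.mpr zero_le_one⟩ x₀ ((M * ‖v - c‖).toNNReal + 1) 0
        (M * ‖v - c‖).toNNReal (Lc * ‖v - c‖₊) := by
      constructor
      · exact fun t _ => (hfield_lip v).lipschitzOnWith
      · exact fun x _ => continuousOn_const
      · intro t _ x _
        exact le_trans (hfield_bd v x) (Real.le_coe_toNNReal _)
      · norm_num
    obtain ⟨f, hf0, hfD⟩ := hpl.exists_eq_forall_mem_Icc_hasDerivWithinAt₀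
    exact ⟨f, hf0, hfD⟩
  choose fl hfl0 hflD using hex
  have hflC : ∀ x v, ContinuousOn (fl x v) (Icc (0:ℝ) 1) :=
    fun x v t ht => (hflD x v t ht).continuousWithinAt
  have hflD' : ∀ x v, ∀ t ∈ Ico (0:ℝ) 1,
      HasDerivWithinAt (fl x v) (Y (fl x v t) (v - c)) (Ici t) t := by
    intro x v t ht
    exact (hflD x v t (Ico_subset_Icc_self ht)).mono_of_mem_nhdsWithin
      (Icc_mem_nhdsGE_of_mem ht)
  -- chunk5 : key lemma: φ along the flow
  have hval : ∀ (v : F) z, A z (Y z (v - c)) = χ z • (v - c) := by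
    intro v z
    by_cases hz : χ z = 0
    · simp [hYdef, hz]
    · have hzU : z ∈ U := hχU (subset_closure (Function.mem_support.mpr hz))
      have h1 : Y z (v - c) = χ z • σ z (v - c) := by simp [hYdef]
      rw [h1, map_smul, hsec z hzU]
  have hkey : ∀ (x : E) (v : F), φ x ∈ closedBall c r → v ∈ closedBall c r →
      ∀ t ∈ Icc (0:ℝ) 1, φ (fl x v t) = φ x + t • (v - c) := by
    intro x v hx hv
    set γ := fl x v with hγdef
    have hψD : ∀ t ∈ Icc (0:ℝ) 1, HasDerivWithinAt (fun s => φ (γ s))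
        (A (γ t) (Y (γ t) (v - c))) (Icc (0:ℝ) 1) t := by
      intro t ht
      have h1 : HasFDerivAt φ (A (γ t)) (γ t) :=
        ((hφ.differentiable (by simp)) (γ t)).hasFDerivAt
      exact h1.comp_hasDerivWithinAt t (hflD x v t ht)
    have hvnorm : ‖v - c‖ ≤ r := by
      rw [← dist_eq_norm]; exact mem_closedBall.mp hv
    have hbd : ∀ t ∈ Icc (0:ℝ) 1, ‖A (γ t) (Y (γ t) (v - c))‖ ≤ ‖v - c‖ := by
      intro t ht
      rw [hval v (γ t), norm_smul]
      have h1 : ‖χ (γ t)‖ ≤ 1 := by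
        rw [Real.norm_eq_abs, abs_of_nonneg (hχ01 _).1]; exact (hχ01 _).2
      calc ‖χ (γ t)‖ * ‖v - c‖ ≤ 1 * ‖v - c‖ :=
            mul_le_mul_of_nonneg_right h1 (norm_nonneg _)
        _ = ‖v - c‖ := one_mul _
    have hin : ∀ t ∈ Icc (0:ℝ) 1, γ t ∈ K2 := by
      intro t ht
      have hsub : ‖φ (γ t) - φ (γ 0)‖ ≤ ‖v - c‖ * ‖t - 0‖ :=
        (convex_Icc (0:ℝ) 1).norm_image_sub_le_of_norm_hasDerivWithin_le hψD hbd
          (left_mem_Icc.mpr zero_le_one) ht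
      have ht1 : ‖t - 0‖ ≤ 1 := by
        rw [sub_zero, Real.norm_eq_abs, abs_of_nonneg ht.1]; exact ht.2
      have : ‖φ (γ t) - c‖ ≤ 2 * r := by
        have h0 : γ 0 = x := hfl0 x v
        calc ‖φ (γ t) - c‖ = ‖(φ (γ t) - φ (γ 0)) + (φ (γ 0) - c)‖ := by
              congr 1; abel
          _ ≤ ‖φ (γ t) - φ (γ 0)‖ + ‖φ (γ 0) - c‖ := norm_add_le _ _
          _ ≤ ‖v - c‖ * 1 + r := by
              apply add_le_add
              · exact le_trans hsub (mul_le_mul_of_nonneg_left ht1 (norm_nonneg _))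
              · rw [h0, ← dist_eq_norm]; exact mem_closedBall.mp hx
          _ ≤ 2 * r := by linarith
      simp only [hK2def, mem_preimage, mem_closedBall, dist_eq_norm]
      exact this
    -- on K2, χ = 1, so the derivative is exactly v - c
    have hθ : ∀ t ∈ Icc (0:ℝ) 1, HasDerivWithinAt
        (fun s => φ (γ s) - s • (v - c)) (0 : F) (Icc (0:ℝ) 1) t := by
      intro t ht
      have h1 := (hψD t ht).sub ((hasDerivWithinAt_id t (Icc (0:ℝ) 1)).smul_const (v - c))
      have h2 : A (γ t) (Y (γ t) (v - c)) - (1:ℝ) • (v - c) = 0 := by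
        rw [hval v (γ t), hχ1 _ (hin t ht)]
        simp
      rwa [h2] at h1
    intro t ht
    have := (convex_Icc (0:ℝ) 1).norm_image_sub_le_of_norm_hasDerivWithin_le (C := 0) hθ
      (fun s _ => by simp) (left_mem_Icc.mpr zero_le_one) ht
    simp only [zero_mul] at this
    have h0 : γ 0 = x := hfl0 x v
    have heq : φ (γ t) - t • (v - c) - (φ (γ 0) - (0:ℝ) • (v - c)) = 0 :=
      norm_le_zero_iff.mp this
    rw [h0] at heq
    have : φ (γ t) - t • (v - c) - φ x = 0 := by rw [← heq]; simp
    have := sub_eq_zero.mp this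
    rw [← this]; abel
  -- chunk6 : reversal property
  have hrev : ∀ (x : E) (v : F), fl (fl x v 1) (c + (c - v)) 1 = x := by
    intro x v
    set v' : F := c + (c - v) with hv'def
    set γ := fl x v with hγdef
    set η : ℝ → E := fun t => γ (1 - t) with hηdef
    have hmap : MapsTo (fun s : ℝ => 1 - s) (Icc (0:ℝ) 1) (Icc (0:ℝ) 1) := by
      intro s hs
      simp only [mem_Icc] at hs ⊢
      constructor <;> linarith
    have hηC : ContinuousOn η (Icc (0:ℝ) 1) :=
      (hflC x v).comp (continuous_const.sub continuous_id).continuousOn hmap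
    have hηD : ∀ t ∈ Ico (0:ℝ) 1, HasDerivWithinAt η (Y (η t) (v' - c)) (Ici t) t := by
      intro t ht
      have h1t : (1 - t) ∈ Ioc (0:ℝ) 1 := ⟨by linarith [ht.2], by linarith [ht.1]⟩
      have hγD : HasDerivWithinAt γ (Y (γ (1 - t)) (v - c)) (Iic (1 - t)) (1 - t) :=
        (hflD x v (1 - t) (Ioc_subset_Icc_self h1t)).mono_of_mem_nhdsWithin
          (Icc_mem_nhdsLE_of_mem h1t)
      have hg : HasDerivWithinAt (fun s : ℝ => 1 - s) (-1) (Ici t) t := by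
        exact (hasDerivWithinAt_id t (Ici t)).const_sub 1
      have hmap2 : MapsTo (fun s : ℝ => 1 - s) (Ici t) (Iic (1 - t)) := by
        intro s hs; simp only [mem_Iic]; simp only [mem_Ici] at hs; linarith
      have hcomp := HasDerivWithinAt.scomp t hγD hg hmap2
      have heq : (-1 : ℝ) • Y (γ (1 - t)) (v - c) = Y (η t) (v' - c) := by
        have h2 : v' - c = -(v - c) := by rw [hv'def]; abel
        rw [h2, map_neg]
        simp [hηdef]
      rwa [heq] at hcomp
    have huniq := ODE_solution_unique (v := fun _ y => Y y (v' - c))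
      (fun _ => hfield_lip v') hηC hηD (hflC (γ 1) v')
      (hflD' (γ 1) v') (by simp [hηdef, hfl0])
    have h1 := huniq (right_mem_Icc.mpr zero_le_one)
    have h2 : η 1 = x := by simp [hηdef, hγdef, hfl0]
    rw [h2] at h1
    exact h1.symm
  -- chunk7 : Gronwall estimates
  set Kr : NNReal := Lc * r.toNNReal + 1 with hKrdef
  have hKr1 : (1:ℝ) ≤ (Kr:ℝ) := by
    simp only [hKrdef, NNReal.coe_add, NNReal.coe_mul, NNReal.coe_one]
    have h0 : (0:ℝ) ≤ (Lc:ℝ) * (r.toNNReal:ℝ) :=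
      mul_nonneg (NNReal.coe_nonneg Lc) (NNReal.coe_nonneg r.toNNReal)
    linarith
  have hKrpos : (0:ℝ) < (Kr:ℝ) := lt_of_lt_of_le one_pos hKr1
  have hfieldKr : ∀ v ∈ closedBall c r, LipschitzWith Kr (fun y => Y y (v - c)) := by
    intro v hv
    apply (hfield_lip v).weaken
    have h1 : ‖v - c‖₊ ≤ r.toNNReal := by
      have : ‖v - c‖ ≤ r := by rw [← dist_eq_norm]; exact mem_closedBall.mp hv
      rw [← NNReal.coe_le_coe, coe_nnnorm, Real.coe_toNNReal r hrpos.le]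
      exact this
    calc Lc * ‖v - c‖₊ ≤ Lc * r.toNNReal := mul_le_mul' le_rfl h1
      _ ≤ Kr := by rw [hKrdef]; exact le_self_add
  have hgron : ∀ (v v' : F) (x x' : E), v ∈ closedBall c r → v' ∈ closedBall c r →
      ∀ t ∈ Icc (0:ℝ) 1, dist (fl x v t) (fl x' v' t) ≤
        (dist x x' + M * dist v v') * exp Kr := by
    intro v v' x x' hv hv' t ht
    have g_bound : ∀ t' ∈ Ico (0:ℝ) 1,
        dist (Y (fl x' v' t') (v' - c)) (Y (fl x' v' t') (v - c)) ≤ M * dist v v' := by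
      intro t' _
      have h1 : Y (fl x' v' t') (v' - c) - Y (fl x' v' t') (v - c)
          = Y (fl x' v' t') (v' - v) := by
        rw [← map_sub]; congr 1; abel
      calc dist (Y (fl x' v' t') (v' - c)) (Y (fl x' v' t') (v - c))
          = ‖Y (fl x' v' t') (v' - v)‖ := by rw [dist_eq_norm, h1]
        _ ≤ M * ‖v' - v‖ := le_trans ((Y _).le_opNorm _)
            (mul_le_mul_of_nonneg_right (hM _) (norm_nonneg _))
        _ = M * dist v v' := by rw [← dist_eq_norm, dist_comm]
    have f_bound : ∀ t' ∈ Ico (0:ℝ) 1,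
        dist (Y (fl x v t') (v - c)) (Y (fl x v t') (v - c)) ≤ 0 := by
      intro t' _; simp
    have ha : dist (fl x v 0) (fl x' v' 0) ≤ dist x x' := by
      rw [hfl0, hfl0]
    have happrox := dist_le_of_approx_trajectories_ODE
      (v := fun _ y => Y y (v - c)) (fun _ => hfieldKr v hv)
      (hflC x v) (hflD' x v) f_bound
      (hflC x' v') (hflD' x' v') g_bound ha t ht
    have hδ : (0:ℝ) ≤ dist x x' := dist_nonneg
    have hε : (0:ℝ) ≤ M * dist v v' := mul_nonneg hM0 dist_nonneg
    have hexp : exp ((Kr:ℝ) * (t - 0)) ≤ exp Kr := by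
      apply exp_le_exp.mpr
      calc (Kr:ℝ) * (t - 0) ≤ (Kr:ℝ) * 1 := by
            apply mul_le_mul_of_nonneg_left _ hKrpos.le
            simpa using ht.2
        _ = Kr := mul_one _
    have hgb : gronwallBound (dist x x') Kr (0 + M * dist v v') (t - 0) ≤
        (dist x x' + M * dist v v') * exp Kr := by
      rw [gronwallBound_of_K_ne_0 (ne_of_gt hKrpos)]
      have h2 : (0 + M * dist v v') / (Kr:ℝ) ≤ M * dist v v' := by
        rw [zero_add]
        exact div_le_self hε hKr1
      have h3 : exp ((Kr:ℝ) * (t - 0)) - 1 ≤ exp Kr := by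
        have := exp_pos ((Kr:ℝ) * (t - 0))
        linarith
      have h4 : (0:ℝ) ≤ exp ((Kr:ℝ) * (t - 0)) - 1 := by
        have h5 : (0:ℝ) ≤ (Kr:ℝ) * (t - 0) := by
          apply mul_nonneg hKrpos.le
          simpa using ht.1
        have := Real.one_le_exp h5
        linarith
      calc dist x x' * exp ((Kr:ℝ) * (t - 0)) +
            (0 + M * dist v v') / Kr * (exp ((Kr:ℝ) * (t - 0)) - 1)
          ≤ dist x x' * exp Kr + (M * dist v v') * exp Kr := by
            apply add_le_add
            · exact mul_le_mul_of_nonneg_left hexp hδ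
            · apply mul_le_mul h2 h3 h4 hε
        _ = (dist x x' + M * dist v v') * exp Kr := by ring
    exact le_trans happrox hgb
  -- chunk8 : assembly
  refine ⟨ball c r, isOpen_ball, mem_ball_self hrpos, ?_⟩
  have hballcb : ball c r ⊆ closedBall c r := ball_subset_closedBall
  have hccb : c ∈ closedBall c r := mem_closedBall_self hrpos.le
  have h11 : (1:ℝ) ∈ Icc (0:ℝ) 1 := right_mem_Icc.mpr zero_le_one
  -- forward map membership
  have hfwd : ∀ (x : E) (v : F), φ x = c → v ∈ ball c r → φ (fl x v 1) = v := by
    intro x v hx hv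
    have := hkey x v (by rw [hx]; exact hccb) (hballcb hv) 1 h11
    rw [this, hx, one_smul]
    abel
  -- backward parameter and membership
  have hw_mem : ∀ y : E, φ y ∈ ball c r → (c + (c - φ y)) ∈ closedBall c r := by
    intro y hy
    rw [mem_closedBall, dist_eq_norm]
    have : c + (c - φ y) - c = -(φ y - c) := by abel
    rw [this, norm_neg, ← dist_eq_norm]
    exact (mem_ball.mp hy).le
  have hbwd : ∀ y : E, φ y ∈ ball c r → φ (fl y (c + (c - φ y)) 1) = c := by
    intro y hy
    have := hkey y (c + (c - φ y)) (hballcb hy) (hw_mem y hy) 1 h11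
    rw [this, one_smul]
    abel
  -- the equivalence
  refine ⟨{
    toFun := fun z => ⟨fl (z.1 : E) ((z.2 : F)) 1, by
      have hx : φ (z.1 : E) = c := z.1.2
      simp only [mem_preimage]
      rw [hfwd (z.1 : E) (z.2 : F) hx z.2.2]
      exact z.2.2⟩
    invFun := fun y => (⟨fl (y : E) (c + (c - φ (y : E))) 1, by
        simp only [mem_preimage, mem_singleton_iff]
        exact hbwd y y.2⟩,
      ⟨φ (y : E), y.2⟩)
    left_inv := ?_
    right_inv := ?_ }, ?_, ?_, ?_, ?_, ?_⟩
  · rintro ⟨⟨x, hx⟩, ⟨v, hv⟩⟩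
    simp only [mem_preimage, mem_singleton_iff] at hx
    have hφ1 : φ (fl x v 1) = v := hfwd x v hx hv
    refine Prod.ext ?_ ?_
    · apply Subtype.ext
      simp only [hφ1]
      exact hrev x v
    · apply Subtype.ext
      simp only [hφ1]
  · rintro ⟨y, hy⟩
    simp only [mem_preimage] at hy
    apply Subtype.ext
    simp only
    have h2 : c + (c - (c + (c - φ y))) = φ y := by abel
    have := hrev y (c + (c - φ y))
    rw [h2] at this
    exact this
  · exact ((1 + M) * exp Kr).toNNReal
  · exact (max ((1 + M * Lφ) * exp Kr) Lφ).toNNReal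
  · -- forward Lipschitz
    apply LipschitzWith.of_dist_le_mul
    rintro ⟨⟨x, hx⟩, ⟨v, hv⟩⟩ ⟨⟨x', hx'⟩, ⟨v', hv'⟩⟩
    simp only [Equiv.coe_fn_mk, Subtype.dist_eq, Prod.dist_eq]
    have h1 := hgron v v' x x' (hballcb hv) (hballcb hv') 1 h11
    have hnn : (0:ℝ) ≤ (1 + M) * exp Kr := by positivity
    rw [Real.coe_toNNReal _ hnn]
    have hmax : dist x x' + M * dist v v' ≤
        (1 + M) * max (dist x x') (dist v v') := by
      have h2 : dist x x' ≤ max (dist x x') (dist v v') := le_max_left _ _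
      have h3 : dist v v' ≤ max (dist x x') (dist v v') := le_max_right _ _
      have h4 : M * dist v v' ≤ M * max (dist x x') (dist v v') :=
        mul_le_mul_of_nonneg_left h3 hM0
      nlinarith [dist_nonneg (x := x) (y := x')]
    calc dist (fl x v 1) (fl x' v' 1) ≤ (dist x x' + M * dist v v') * exp Kr := h1
      _ ≤ ((1 + M) * max (dist x x') (dist v v')) * exp Kr :=
          mul_le_mul_of_nonneg_right hmax (exp_pos _).le
      _ = (1 + M) * exp Kr * max (dist x x') (dist v v') := by ring
  · -- backward Lipschitz
    apply LipschitzWith.of_dist_le_mul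
    rintro ⟨y, hy⟩ ⟨y', hy'⟩
    simp only [mem_preimage] at hy hy'
    simp only [Equiv.coe_fn_symm_mk, Subtype.dist_eq, Prod.dist_eq]
    have hyK2 : y ∈ K2 := by
      simp only [hK2def, mem_preimage]
      exact closedBall_subset_closedBall (by linarith) (hballcb hy)
    have hyK2' : y' ∈ K2 := by
      simp only [hK2def, mem_preimage]
      exact closedBall_subset_closedBall (by linarith) (hballcb hy')
    have hφd : dist (φ y) (φ y') ≤ Lφ * dist y y' := hφLip y hyK2 y' hyK2'
    have hwd : dist (c + (c - φ y)) (c + (c - φ y')) = dist (φ y) (φ y') := by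
      rw [dist_eq_norm, dist_eq_norm]
      have : c + (c - φ y) - (c + (c - φ y')) = -(φ y - φ y') := by abel
      rw [this, norm_neg]
    have h1 := hgron (c + (c - φ y)) (c + (c - φ y')) y y'
      (hw_mem y hy) (hw_mem y' hy') 1 h11
    rw [hwd] at h1
    have hnn : (0:ℝ) ≤ max ((1 + M * Lφ) * exp Kr) Lφ :=
      le_trans (NNReal.coe_nonneg Lφ) (le_max_right _ _)
    rw [Real.coe_toNNReal _ hnn]
    apply max_le
    · calc dist (fl y (c + (c - φ y)) 1) (fl y' (c + (c - φ y')) 1)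
          ≤ (dist y y' + M * dist (φ y) (φ y')) * exp Kr := h1
        _ ≤ (dist y y' + M * (Lφ * dist y y')) * exp Kr := by
            apply mul_le_mul_of_nonneg_right _ (exp_pos _).le
            have := mul_le_mul_of_nonneg_left hφd hM0
            linarith
        _ = ((1 + M * Lφ) * exp Kr) * dist y y' := by ring
        _ ≤ max ((1 + M * Lφ) * exp Kr) Lφ * dist y y' :=
            mul_le_mul_of_nonneg_right (le_max_left _ _) dist_nonneg
    · calc dist (φ y) (φ y') ≤ Lφ * dist y y' := hφd
        _ ≤ max ((1 + M * Lφ) * exp Kr) Lφ * dist y y' :=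
            mul_le_mul_of_nonneg_right (le_max_right _ _) dist_nonneg
  · -- projection property
    rintro ⟨⟨x, hx⟩, ⟨v, hv⟩⟩
    simp only [Equiv.coe_fn_mk]
    exact hfwd x v hx hv

end Aux

/-- for a smooth map with nowhere dense set of critical values, a regular
value over a neighbourhood of which the map is proper is a Lipschitz trivial value. -/
theorem stmt_4 {n p : ℕ}
    (φ : EuclideanSpace ℝ (Fin n) → EuclideanSpace ℝ (Fin p))
    (hφ : ContDiff ℝ (⊤ : ℕ∞) φ)
    (hcrit : IsNowhereDense (φ '' {x | ¬ Function.Surjective (fderiv ℝ φ x)}))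
    (c : EuclideanSpace ℝ (Fin p))
    (hreg : ∀ x, φ x = c → Function.Surjective (fderiv ℝ φ x))
    (hproper : ∃ V : Set (EuclideanSpace ℝ (Fin p)), IsOpen V ∧ c ∈ V ∧
      ∀ K : Set (EuclideanSpace ℝ (Fin p)), K ⊆ V → IsCompact K → IsCompact (φ ⁻¹' K)) :
    LipTrivAt φ c := by
  exact lipTrivAt_aux φ hφ c hreg hproper
end

section
/- Let φ : ℝⁿ → ℝᵖ be a C^k map with k ≥ max(n − p + 1, 1). Then every Lipschitz trivial value of φ is a regular value of φ. -/
/-!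
Freezing the fibre coordinate of the trivialisation at a point `x` over `c` gives a local
section `g` of `φ` through `x` which is Lipschitz. Differentiating `φ ∘ g = id` at `c` along
the line `s ↦ c + s • v` gives `Dφ(x) (s⁻¹ • (g (c + s • v) - x)) → v` as `s → 0`, so the
range of `Dφ(x)` is dense, hence everything, being finite-dimensional.
-/

open Filter Topology Asymptotics

section Calculus

variable {𝕜 E F : Type*} [NontriviallyNormedField 𝕜]
  [NormedAddCommGroup E] [NormedSpace 𝕜 E] [NormedAddCommGroup F] [NormedSpace 𝕜 F]

theorem ContinuousLinearMap.denseRange_of_isLittleO {L : E →L[𝕜] F} {h : F → E} {y : F}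
    (hL : (fun t => (t - y) - L (h t)) =o[𝓝 y] fun t => t - y) : DenseRange L := by
  refine Metric.denseRange_iff.2 fun v r hr => ?_
  set ε := r / (‖v‖ + 1)
  have hline : Tendsto (fun s : 𝕜 => y + s • v) (𝓝[≠] 0) (𝓝 y) := by
    refine tendsto_nhdsWithin_of_tendsto_nhds ?_
    simpa using ((tendsto_id (x := 𝓝 (0 : 𝕜))).smul_const v).const_add y
  obtain ⟨s, hs, hs0⟩ :=
    ((hline.eventually (hL.def (by positivity : 0 < ε))).and self_mem_nhdsWithin).exists
  set w := y + s • v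
  refine ⟨s⁻¹ • h w, ?_⟩
  calc dist v (L (s⁻¹ • h w)) = ‖s⁻¹ • (s • v - L (h w))‖ := by
        rw [dist_eq_norm, map_smul, smul_sub, inv_smul_smul₀ hs0]
    _ = ‖s‖⁻¹ * ‖s • v - L (h w)‖ := by rw [norm_smul, norm_inv]
    _ ≤ ‖s‖⁻¹ * (ε * ‖s • v‖) := by gcongr; simpa [w] using hs
    _ = ε * ‖v‖ := by
        rw [norm_smul]
        field_simp [norm_ne_zero_iff.2 hs0]
    _ < r := by
        rw [div_mul_eq_mul_div, div_lt_iff₀ (by positivity)]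
        nlinarith [norm_nonneg v]

theorem ContinuousLinearMap.surjective_of_denseRange [CompleteSpace 𝕜] [FiniteDimensional 𝕜 F]
    {L : E →L[𝕜] F} (hL : DenseRange L) : Function.Surjective L := by
  rw [← Set.range_eq_univ, ← hL.closure_range]
  exact ((LinearMap.range (L : E →ₗ[𝕜] F)).closed_of_finiteDimensional.closure_eq).symm

theorem HasFDerivAt.surjective_of_lipschitzOnWith_rightInverse [CompleteSpace 𝕜]
    [FiniteDimensional 𝕜 F] {f : E → F} {f' : E →L[𝕜] F} {x : E} (hf : HasFDerivAt f f' x)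
    {g : F → E} {V : Set F} {K : NNReal} (hV : V ∈ 𝓝 (f x)) (hg : LipschitzOnWith K g V)
    (hgx : g (f x) = x) (hfg : Set.EqOn (f ∘ g) id V) : Function.Surjective f' := by
  have hgO : (fun t => g t - x) =O[𝓝 (f x)] fun t => t - f x := by
    refine IsBigO.of_bound K ?_
    filter_upwards [hV] with t ht
    simpa only [← dist_eq_norm, hgx] using hg.dist_le_mul t ht _ (mem_of_mem_nhds hV)
  have hgt : Tendsto g (𝓝 (f x)) (𝓝 x) := by
    simpa only [ContinuousAt, hgx] using hg.continuousOn.continuousAt hV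
  have hlo : (fun t => (t - f x) - f' (g t - x)) =o[𝓝 (f x)] fun t => t - f x := by
    refine ((hf.isLittleO.comp_tendsto hgt).trans_isBigO hgO).congr' ?_ EventuallyEq.rfl
    filter_upwards [hV] with t ht
    simp only [Function.comp_apply, show f (g t) = t from hfg ht]
  exact f'.surjective_of_denseRange (f'.denseRange_of_isLittleO hlo)

end Calculus

theorem LipTrivAt.exists_lipschitzOnWith_section {E F : Type*} [MetricSpace E] [MetricSpace F]
    {f : E → F} {c : F} (hc : LipTrivAt f c) {x : E} (hx : f x = c) :
    ∃ V ∈ 𝓝 c, ∃ (g : F → E) (K : NNReal),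
      LipschitzOnWith K g V ∧ g c = x ∧ Set.EqOn (f ∘ g) id V := by
  classical
  obtain ⟨V, hVo, hcV, H, K, -, hH, -, hfH⟩ := hc
  set z := H.symm ⟨x, show f x ∈ V from hx ▸ hcV⟩
  have hHz : (H z : E) = x := by simp [z]
  have hz : z = (z.1, ⟨c, hcV⟩) := Prod.ext rfl (Subtype.ext (by rw [← hfH z, hHz, hx]))
  let g : F → E := fun t => if h : t ∈ V then H (z.1, ⟨t, h⟩) else x
  have hg : V.domRestrict g = Subtype.val ∘ H ∘ Prod.mk z.1 := by
    funext t
    simp [g, t.2]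
  refine ⟨V, hVo.mem_nhds hcV, g, K, ?_, ?_, fun t ht => ?_⟩
  · rw [lipschitzOnWith_iff_restrict, hg]
    simpa using (LipschitzWith.subtype_val _).comp (hH.comp (LipschitzWith.prodMk_left z.1))
  · simp only [g, dif_pos hcV, ← hz, hHz]
  · simp [g, ht, hfH]

/-- for a C^k map with k ≥ max(n−p+1, 1), every Lipschitz trivial value is
a regular value. -/
theorem stmt_5 {n p : ℕ} (k : ℕ) (hk : max (n - p + 1) 1 ≤ k)
    (φ : EuclideanSpace ℝ (Fin n) → EuclideanSpace ℝ (Fin p))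
    (hφ : ContDiff ℝ k φ)
    (c : EuclideanSpace ℝ (Fin p)) (hc : LipTrivAt φ c) :
    ∀ x, φ x = c → Function.Surjective (fderiv ℝ φ x) := by
  intro x hx
  obtain ⟨V, hV, g, K, hg, hgx, hφg⟩ := hc.exists_lipschitzOnWith_section hx
  have hk₀ : (k : WithTop ℕ∞) ≠ 0 := by exact_mod_cast (by omega : k ≠ 0)
  have hφx : HasFDerivAt φ (fderiv ℝ φ x) x := (hφ.differentiable hk₀ x).hasFDerivAt
  subst hx
  exact hφx.surjective_of_lipschitzOnWith_rightInverse hV hg hgx hφg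
end

section
/- Let f : 𝕂ⁿ → 𝕂ᵖ be a polynomial map attaining c as a Lipschitz trivial value, and suppose the accumulation set at infinity of f⁻¹(c) is empty (equivalently f⁻¹(c) is compact). Then f is proper at c: there exists a compact neighbourhood 𝒱 of c such that f⁻¹(𝒱) is compact. -/
/-- The projectivization of a topological vector space carries the quotient topology. -/
noncomputable instance projectivizationTopology (𝕂 : Type*) [DivisionRing 𝕂] (V : Type*)
    [AddCommGroup V] [Module 𝕂 V] [TopologicalSpace V] :
    TopologicalSpace (Projectivization 𝕂 V) := by
  unfold Projectivization; infer_instance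

/-- The embedding of Kn into the projectivization of Kn x K, sending x to [x : 1]. -/
noncomputable def toProj {𝕂 : Type*} [RCLike 𝕂] {n : ℕ} (x : EuclideanSpace 𝕂 (Fin n)) :
    Projectivization 𝕂 (EuclideanSpace 𝕂 (Fin n) × 𝕂) :=
  Projectivization.mk 𝕂 (x, (1 : 𝕂)) (fun h => one_ne_zero (congrArg Prod.snd h))

/-- The point at infinity [v : 0] determined by a nonzero vector v of Kn. -/
noncomputable def atInfty {𝕂 : Type*} [RCLike 𝕂] {n : ℕ} (v : EuclideanSpace 𝕂 (Fin n))
    (hv : v ≠ 0) : Projectivization 𝕂 (EuclideanSpace 𝕂 (Fin n) × 𝕂) :=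
  Projectivization.mk 𝕂 (v, (0 : 𝕂)) (fun h => hv (congrArg Prod.fst h))

/-- The accumulation set at infinity of a subset X of Kn: the intersection of the closure
of X in projective space KPn with the hyperplane at infinity. -/
noncomputable def accInf {𝕂 : Type*} [RCLike 𝕂] {n : ℕ} (X : Set (EuclideanSpace 𝕂 (Fin n))) :
    Set (Projectivization 𝕂 (EuclideanSpace 𝕂 (Fin n) × 𝕂)) :=
  closure (toProj '' X) ∩
    {P | ∃ (v : EuclideanSpace 𝕂 (Fin n)) (hv : v ≠ 0), P = atInfty v hv}

/-- f : Kn → Kp is a polynomial mapping: each component is given by a polynomial in n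
variables over 𝕂. -/
def IsPolynomialMap {𝕂 : Type*} [RCLike 𝕂] {n p : ℕ}
    (f : EuclideanSpace 𝕂 (Fin n) → EuclideanSpace 𝕂 (Fin p)) : Prop :=
  ∃ P : Fin p → MvPolynomial (Fin n) 𝕂,
    ∀ (x : EuclideanSpace 𝕂 (Fin n)) (i : Fin p),
      f x i = MvPolynomial.eval (fun j => x j) (P i)

/-!
An unbounded set `X ⊆ 𝕂ⁿ` has a point at infinity in its projective closure: writing
`[x : 1] = [x/(‖x‖+1) : 1/(‖x‖+1)]`, along an ultrafilter on `X` tending to infinity the first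
coordinate converges to a unit vector by compactness and the second to `0`. Hence the fibre
`f⁻¹(c)` is bounded. A Lipschitz trivialisation `H : f⁻¹(c) × 𝒱 → f⁻¹(𝒱)` maps the bounded set
`f⁻¹(c) × (𝒱 ∩ B(c, 1))` onto `f⁻¹(𝒱 ∩ B(c, 1))`, so a small closed ball around `c` has a closed
and bounded, hence compact, preimage.
-/

open Metric Filter Bornology Topology

theorem Projectivization.tendsto_mk {𝕂 V α : Type*} [DivisionRing 𝕂] [AddCommGroup V]
    [Module 𝕂 V] [TopologicalSpace V] {l : Filter α} {w : α → V} (hw : ∀ a, w a ≠ 0)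
    {w₀ : V} (hw₀ : w₀ ≠ 0) (h : Tendsto w l (𝓝 w₀)) :
    Tendsto (fun a => mk 𝕂 (w a) (hw a)) l (𝓝 (mk 𝕂 w₀ hw₀)) :=
  ((continuous_quotient_mk' (s := projectivizationSetoid 𝕂 V)).tendsto ⟨w₀, hw₀⟩).comp
    (tendsto_subtype_rng.2 h)

theorem Bornology.cobounded_inf_principal_neBot {α : Type*} [Bornology α] {s : Set α}
    (hs : ¬IsBounded s) : (cobounded α ⊓ 𝓟 s).NeBot :=
  inf_principal_neBot_iff.2 fun U hU => by
    by_contra hUs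
    exact hs ((isBounded_compl_iff.2 hU).subset fun x hx hxU => hUs ⟨x, hxU, hx⟩)

section ProjectiveClosure

universe u

variable {𝕂 : Type u} [RCLike 𝕂] {n : ℕ}

theorem toProj_eq_mk_smul (x : EuclideanSpace 𝕂 (Fin n)) {a : 𝕂} (ha : a ≠ 0) :
    toProj x = Projectivization.mk 𝕂 (a • x, a) (fun h => ha (congrArg Prod.snd h)) := by
  rw [toProj, Projectivization.mk_eq_mk_iff']
  exact ⟨a⁻¹, by simp [Prod.smul_mk, smul_smul, ha]⟩

theorem exists_tendsto_toProj_atInfty {𝒰 : Ultrafilter (EuclideanSpace 𝕂 (Fin n))}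
    (h𝒰 : (𝒰 : Filter (EuclideanSpace 𝕂 (Fin n))) ≤ cobounded _) :
    ∃ (v : EuclideanSpace 𝕂 (Fin n)) (hv : v ≠ 0), Tendsto toProj 𝒰 (𝓝 (atInfty v hv)) := by
  let E := EuclideanSpace 𝕂 (Fin n)
  let s : E → ℝ := fun x => (‖x‖ + 1)⁻¹
  have hs_pos (x : E) : 0 < s x := by positivity
  have hs : Tendsto s 𝒰 (𝓝 0) := (tendsto_inv_atTop_zero.comp
    (tendsto_atTop_add_const_right _ 1 tendsto_norm_cobounded_atTop)).mono_left h𝒰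
  let u : E → E := fun x => (s x : 𝕂) • x
  have hu_norm (x : E) : ‖u x‖ = 1 - s x := by
    have : ‖x‖ + 1 ≠ 0 := by positivity
    simp only [u, s, norm_smul, RCLike.norm_ofReal, abs_of_pos (hs_pos x)]
    field_simp
    ring
  obtain ⟨v, -, hu⟩ := (isCompact_closedBall (0 : E) 1).ultrafilter_le_nhds (𝒰.map u)
    (le_principal_iff.2 (Ultrafilter.mem_map.2 (univ_mem' fun x => by
      rw [Set.mem_preimage, mem_closedBall_zero_iff, hu_norm]
      linarith [hs_pos x])))
  have hu : Tendsto u 𝒰 (𝓝 v) := hu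
  have hv_norm : ‖v‖ = 1 := tendsto_nhds_unique hu.norm
    (by simpa [hu_norm] using tendsto_const_nhds.sub hs)
  have hv : v ≠ 0 := by rintro rfl; simp at hv_norm
  have hs_ne (x : E) : (s x : 𝕂) ≠ 0 := RCLike.ofReal_ne_zero.2 (hs_pos x).ne'
  have hs' : Tendsto (fun x => (s x : 𝕂)) 𝒰 (𝓝 0) := by
    simpa [Function.comp_def] using ((RCLike.continuous_ofReal (K := 𝕂)).tendsto 0).comp hs
  refine ⟨v, hv, ?_⟩
  rw [show toProj = fun x : E => Projectivization.mk 𝕂 (u x, (s x : 𝕂)) _ from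
    funext fun x => toProj_eq_mk_smul x (hs_ne x)]
  exact Projectivization.tendsto_mk _ _ (hu.prodMk_nhds hs')

theorem exists_atInfty_mem_closure_of_not_isBounded {X : Set (EuclideanSpace 𝕂 (Fin n))}
    (hX : ¬IsBounded X) :
    ∃ (v : EuclideanSpace 𝕂 (Fin n)) (hv : v ≠ 0), atInfty v hv ∈ closure (toProj '' X) := by
  have := cobounded_inf_principal_neBot hX
  have h𝒰 := Ultrafilter.of_le (cobounded _ ⊓ 𝓟 X)
  obtain ⟨v, hv, hlim⟩ := exists_tendsto_toProj_atInfty (h𝒰.trans inf_le_left)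
  exact ⟨v, hv, mem_closure_of_tendsto hlim (mem_of_superset
    (le_principal_iff.1 (h𝒰.trans inf_le_right)) fun x hx => Set.mem_image_of_mem toProj hx)⟩

theorem isBounded_of_accInf_eq_empty {X : Set (EuclideanSpace 𝕂 (Fin n))} (h : accInf X = ∅) :
    IsBounded X := by
  by_contra hX
  obtain ⟨v, hv, hmem⟩ := exists_atInfty_mem_closure_of_not_isBounded hX
  exact (h ▸ ⟨hmem, v, hv, rfl⟩ : atInfty v hv ∈ (∅ : Set _))

theorem IsPolynomialMap.continuous {𝕂 : Type*} [RCLike 𝕂] {n p : ℕ}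
    {f : EuclideanSpace 𝕂 (Fin n) → EuclideanSpace 𝕂 (Fin p)} (hf : IsPolynomialMap f) :
    Continuous f := by
  obtain ⟨P, hP⟩ := hf
  refine continuous_induced_rng.2 (continuous_pi fun i => ?_)
  simp only [Function.comp_def, hP]
  exact (MvPolynomial.continuous_eval (P i)).comp
    (continuous_pi fun j => (continuous_apply j).comp (PiLp.continuous_ofLp 2 _))

theorem LipTrivAt.exists_isBounded_preimage {E F : Type*} [MetricSpace E] [MetricSpace F]
    {f : E → F} {c : F} (h : LipTrivAt f c) (hc : IsBounded (f ⁻¹' {c})) :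
    ∃ W ∈ 𝓝 c, IsBounded (f ⁻¹' W) := by
  obtain ⟨V, hVo, hcV, H, K, -, hK, -, hH⟩ := h
  refine ⟨V ∩ ball c 1, inter_mem (hVo.mem_nhds hcV) (ball_mem_nhds c one_pos), ?_⟩
  have hbase : IsBounded ((Set.univ : Set (f ⁻¹' {c})) ×ˢ
      ((Subtype.val : V → F) ⁻¹' ball c 1)) :=
    (isometry_subtype_coe.antilipschitz.isBounded_preimage hc |>.subset fun x _ => x.2).prod
      (isometry_subtype_coe.antilipschitz.isBounded_preimage isBounded_ball)
  refine (isometry_subtype_coe.lipschitz.isBounded_image (hK.isBounded_image hbase)).subset ?_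
  rintro y ⟨hyV, hyB⟩
  have hfy := hH (H.symm ⟨y, hyV⟩)
  rw [H.apply_symm_apply] at hfy
  exact ⟨H (H.symm ⟨y, hyV⟩), ⟨_, ⟨trivial, show _ ∈ ball c 1 from hfy ▸ hyB⟩, rfl⟩, by simp⟩

/-- a polynomial map attaining a Lipschitz trivial value c whose fibre has
empty accumulation set at infinity is proper at c. -/
theorem stmt_10 {𝕂 : Type*} [RCLike 𝕂] {n p : ℕ}
    (f : EuclideanSpace 𝕂 (Fin n) → EuclideanSpace 𝕂 (Fin p))
    (hf : IsPolynomialMap f)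
    (c : EuclideanSpace 𝕂 (Fin p))
    (hltv : LipTrivAt f c)
    (hacc : accInf (f ⁻¹' {c}) = ∅) :
    ∃ V : Set (EuclideanSpace 𝕂 (Fin p)),
      V ∈ nhds c ∧ IsCompact V ∧ IsCompact (f ⁻¹' V) := by
  obtain ⟨W, hW, hbdd⟩ := hltv.exists_isBounded_preimage (isBounded_of_accInf_eq_empty hacc)
  obtain ⟨r, hr, hrW⟩ := nhds_basis_closedBall.mem_iff.1 hW
  exact ⟨closedBall c r, closedBall_mem_nhds c hr, isCompact_closedBall c r,
    isCompact_of_isClosed_isBounded (isClosed_closedBall.preimage hf.continuous)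
      (hbdd.subset (Set.preimage_mono hrW))⟩
end ProjectiveClosure
end

section
/- Let f : ℝⁿ → ℝ be f(x, y) = y − 1/h(x) with h(x) = 1 + Σ x_i². For every c ∈ ℝ, the map G : ℝⁿ → ℝ × f⁻¹(c) given by G(x, y) = (f(x,y), (x, c + 1/h(x))) is a bi-Lipschitz homeomorphism whose inverse sends (t, (x, c + 1/h(x))) to (x, t + 1/h(x)); hence every value c ∈ ℝ is a Lipschitz trivial value of f. -/
lemma aux_key16 (a b : ℝ) : |1/(1+a^2) - 1/(1+b^2)| ≤ |a - b| := by
  have ha : (0:ℝ) < 1 + a^2 := by positivity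
  have hb : (0:ℝ) < 1 + b^2 := by positivity
  rw [div_sub_div _ _ ha.ne' hb.ne', abs_div, div_le_iff₀ (by positivity)]
  have h1 : |1 * (1+b^2) - (1+a^2) * 1| = |a - b| * |a + b| := by
    rw [← abs_mul, show (a - b) * (a + b) = a^2 - b^2 from by ring, abs_sub_comm]
    congr 1; ring
  rw [h1, abs_of_pos (show (0:ℝ) < (1+a^2)*(1+b^2) by positivity)]
  refine mul_le_mul_of_nonneg_left ?_ (abs_nonneg _)
  calc |a + b| ≤ |a| + |b| := abs_add_le a b
    _ ≤ (1+a^2)*(1+b^2) := by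
        nlinarith [sq_abs a, sq_abs b, abs_nonneg a, abs_nonneg b,
          sq_nonneg (|a| - 1), sq_nonneg (|b| - 1),
          mul_nonneg (sq_nonneg a) (sq_nonneg b)]

lemma aux_tri16 (a b c d : ℝ) : |(a - b) - (c - d)| ≤ |a - c| + |b - d| := by
  have e : (a - b) - (c - d) = (a - c) + -(b - d) := by ring
  rw [e]
  calc |(a-c) + -(b-d)| ≤ |a-c| + |-(b-d)| := abs_add_le _ _
    _ = |a-c| + |b-d| := by rw [abs_neg]

/-- for f(x,y) = y − 1/h(x) with h(x) = 1 + Σ xᵢ², for every c the map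
G(x,y) = (f(x,y), (x, c + 1/h(x))) is a bi-Lipschitz homeomorphism from ℝⁿ onto
ℝ × f⁻¹(c); hence every value c is a Lipschitz trivial value of f. -/
theorem stmt_16 {m : ℕ} (hm : 1 ≤ m)
    (h : EuclideanSpace ℝ (Fin m) → ℝ)
    (hh : ∀ x, h x = 1 + ∑ i, (x i) ^ 2)
    (f : EuclideanSpace ℝ (Fin m) × ℝ → ℝ)
    (hf : ∀ (x : EuclideanSpace ℝ (Fin m)) (y : ℝ), f (x, y) = y - 1 / h x) :
    ∀ c : ℝ,
      (∃ (G : (EuclideanSpace ℝ (Fin m) × ℝ) ≃ ℝ × ↥(f ⁻¹' {c})) (K K' : NNReal),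
        LipschitzWith K G ∧ LipschitzWith K' G.symm ∧
        ∀ z : EuclideanSpace ℝ (Fin m) × ℝ,
          (G z).1 = f z ∧
          ((G z).2 : EuclideanSpace ℝ (Fin m) × ℝ) = (z.1, c + 1 / h z.1)) ∧
      LipTrivAt f c := by
  intro c
  have hgx : ∀ x : EuclideanSpace ℝ (Fin m), 1 / h x = 1 / (1 + ‖x‖^2) := by
    intro x
    rw [hh]
    congr 2
    rw [EuclideanSpace.norm_eq, Real.sq_sqrt (by positivity)]
    simp [sq_abs]
  have hglip : ∀ x x' : EuclideanSpace ℝ (Fin m), |1 / h x - 1 / h x'| ≤ dist x x' := by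
    intro x x'
    rw [hgx, hgx]
    calc |1/(1+‖x‖^2) - 1/(1+‖x'‖^2)| ≤ |‖x‖ - ‖x'‖| := aux_key16 _ _
      _ ≤ ‖x - x'‖ := abs_norm_sub_norm_le _ _
      _ = dist x x' := (dist_eq_norm _ _).symm
  have hfval : ∀ z : EuclideanSpace ℝ (Fin m) × ℝ, f z = z.2 - 1 / h z.1 :=
    fun z => hf z.1 z.2
  have hmem : ∀ x : EuclideanSpace ℝ (Fin m), (x, c + 1 / h x) ∈ f ⁻¹' {c} := by
    intro x
    simp only [Set.mem_preimage, Set.mem_singleton_iff, hfval]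
    ring
  have hfib : ∀ p : ↥(f ⁻¹' {c}),
      (p : EuclideanSpace ℝ (Fin m) × ℝ).2 = c + 1 / h (p : EuclideanSpace ℝ (Fin m) × ℝ).1 := by
    intro p
    have hp : f (p : EuclideanSpace ℝ (Fin m) × ℝ) = c := p.2
    rw [hfval] at hp
    linarith
  have h2 : ((2 : NNReal) : ℝ) = 2 := by norm_num
  constructor
  · -- the bi-Lipschitz G
    refine ⟨⟨fun z => (f z, ⟨(z.1, c + 1 / h z.1), hmem z.1⟩),
            fun w => (w.2.val.1, w.1 + 1 / h w.2.val.1), ?_, ?_⟩,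
            2, 2, ?_, ?_, fun z => ⟨rfl, rfl⟩⟩
    · -- left inverse
      intro z
      refine Prod.ext_iff.mpr ⟨rfl, ?_⟩
      show f z + 1 / h z.1 = z.2
      rw [hfval]; ring
    · -- right inverse
      intro w
      refine Prod.ext_iff.mpr ⟨?_, ?_⟩
      · show f (w.2.val.1, w.1 + 1 / h w.2.val.1) = w.1
        rw [hf]; ring
      · refine Subtype.ext (Prod.ext_iff.mpr ⟨rfl, (hfib w.2).symm⟩)
    · -- Lipschitz G
      apply LipschitzWith.of_dist_le_mul
      intro z z'
      rw [h2]
      have hx : dist z.1 z'.1 ≤ dist z z' := le_max_left _ _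
      have hy : dist z.2 z'.2 ≤ dist z z' := le_max_right _ _
      have hg : |1 / h z.1 - 1 / h z'.1| ≤ dist z z' := (hglip _ _).trans hx
      have hd : (0:ℝ) ≤ dist z z' := dist_nonneg
      refine le_trans (le_of_eq (Prod.dist_eq)) (max_le ?_ ?_)
      · show dist (f z) (f z') ≤ 2 * dist z z'
        rw [Real.dist_eq, hfval z, hfval z']
        calc |(z.2 - 1/h z.1) - (z'.2 - 1/h z'.1)| ≤ |z.2 - z'.2| + |1/h z.1 - 1/h z'.1| :=
            aux_tri16 _ _ _ _
          _ ≤ dist z z' + dist z z' := add_le_add (Real.dist_eq _ _ ▸ hy) hg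
          _ = 2 * dist z z' := by ring
      · show dist (⟨(z.1, c + 1 / h z.1), hmem z.1⟩ : ↥(f ⁻¹' {c}))
            ⟨(z'.1, c + 1 / h z'.1), hmem z'.1⟩ ≤ 2 * dist z z'
        rw [Subtype.dist_eq]
        refine le_trans (le_of_eq (Prod.dist_eq)) (max_le ?_ ?_)
        · show dist z.1 z'.1 ≤ 2 * dist z z'
          nlinarith
        · show dist (c + 1 / h z.1) (c + 1 / h z'.1) ≤ 2 * dist z z'
          rw [Real.dist_eq]
          calc |c + 1/h z.1 - (c + 1/h z'.1)| = |1/h z.1 - 1/h z'.1| := by ring_nf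
            _ ≤ dist z z' := hg
            _ ≤ 2 * dist z z' := by nlinarith
    · -- Lipschitz G.symm
      apply LipschitzWith.of_dist_le_mul
      intro w w'
      rw [h2]
      have hd : (0:ℝ) ≤ dist w w' := dist_nonneg
      have h1w : dist w.1 w'.1 ≤ dist w w' := le_max_left _ _
      have h2w : dist w.2.val w'.2.val ≤ dist w w' := by
        rw [← Subtype.dist_eq]; exact le_max_right _ _
      have hxw : dist w.2.val.1 w'.2.val.1 ≤ dist w w' :=
        le_trans (le_trans (le_max_left _ _) (le_of_eq (Prod.dist_eq).symm)) h2w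
      have hg : |1 / h w.2.val.1 - 1 / h w'.2.val.1| ≤ dist w w' := (hglip _ _).trans hxw
      refine le_trans (le_of_eq (Prod.dist_eq)) (max_le ?_ ?_)
      · show dist w.2.val.1 w'.2.val.1 ≤ 2 * dist w w'
        nlinarith
      · show dist (w.1 + 1 / h w.2.val.1) (w'.1 + 1 / h w'.2.val.1) ≤ 2 * dist w w'
        rw [Real.dist_eq]
        calc |(w.1 + 1/h w.2.val.1) - (w'.1 + 1/h w'.2.val.1)|
            = |(w.1 - (- (1/h w.2.val.1))) - (w'.1 - (- (1/h w'.2.val.1)))| := by ring_nf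
          _ ≤ |w.1 - w'.1| + |(- (1/h w.2.val.1)) - (- (1/h w'.2.val.1))| := aux_tri16 _ _ _ _
          _ = |w.1 - w'.1| + |1/h w.2.val.1 - 1/h w'.2.val.1| := by
              congr 1
              rw [← abs_neg]; congr 1; ring
          _ ≤ dist w w' + dist w w' := add_le_add (Real.dist_eq _ _ ▸ h1w) hg
          _ = 2 * dist w w' := by ring
  · -- LipTrivAt
    refine ⟨Set.univ, isOpen_univ, Set.mem_univ c, ?_⟩
    refine ⟨⟨fun z => ⟨(z.1.val.1, (z.2 : ℝ) + 1 / h z.1.val.1), Set.mem_univ _⟩,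
            fun w => (⟨(w.val.1, c + 1 / h w.val.1), hmem _⟩, ⟨f w.val, Set.mem_univ _⟩),
            ?_, ?_⟩,
            2, 2, ?_, ?_, ?_⟩
    · -- left inverse
      intro z
      refine Prod.ext_iff.mpr ⟨?_, ?_⟩
      · exact Subtype.ext (Prod.ext_iff.mpr ⟨rfl, (hfib z.1).symm⟩)
      · refine Subtype.ext ?_
        show f (z.1.val.1, (z.2 : ℝ) + 1 / h z.1.val.1) = (z.2 : ℝ)
        rw [hf]; ring
    · -- right inverse
      intro w
      refine Subtype.ext (Prod.ext_iff.mpr ⟨rfl, ?_⟩)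
      show f w.val + 1 / h w.val.1 = w.val.2
      rw [hfval]; ring
    · -- Lipschitz H
      apply LipschitzWith.of_dist_le_mul
      intro z z'
      rw [h2]
      have hd : (0:ℝ) ≤ dist z z' := dist_nonneg
      have hp : dist z.1 z'.1 ≤ dist z z' := le_max_left _ _
      have ht : dist (z.2 : ℝ) (z'.2 : ℝ) ≤ dist z z' := by
        rw [← Subtype.dist_eq]; exact le_max_right _ _
      have hx : dist z.1.val.1 z'.1.val.1 ≤ dist z z' := by
        refine le_trans ?_ hp
        rw [Subtype.dist_eq]
        exact le_trans (le_max_left _ _) (le_of_eq (Prod.dist_eq).symm)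
      have hg : |1 / h z.1.val.1 - 1 / h z'.1.val.1| ≤ dist z z' := (hglip _ _).trans hx
      rw [Subtype.dist_eq]
      refine le_trans (le_of_eq (Prod.dist_eq)) (max_le ?_ ?_)
      · show dist z.1.val.1 z'.1.val.1 ≤ 2 * dist z z'
        nlinarith
      · show dist ((z.2 : ℝ) + 1 / h z.1.val.1) ((z'.2 : ℝ) + 1 / h z'.1.val.1) ≤ 2 * dist z z'
        rw [Real.dist_eq]
        calc |((z.2:ℝ) + 1/h z.1.val.1) - ((z'.2:ℝ) + 1/h z'.1.val.1)|
            = |((z.2:ℝ) - (- (1/h z.1.val.1))) - ((z'.2:ℝ) - (- (1/h z'.1.val.1)))| := by ring_nf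
          _ ≤ |(z.2:ℝ) - (z'.2:ℝ)| + |(- (1/h z.1.val.1)) - (- (1/h z'.1.val.1))| :=
              aux_tri16 _ _ _ _
          _ = |(z.2:ℝ) - (z'.2:ℝ)| + |1/h z.1.val.1 - 1/h z'.1.val.1| := by
              congr 1
              rw [← abs_neg]; congr 1; ring
          _ ≤ dist z z' + dist z z' := add_le_add (Real.dist_eq _ _ ▸ ht) hg
          _ = 2 * dist z z' := by ring
    · -- Lipschitz H.symm
      apply LipschitzWith.of_dist_le_mul
      intro w w'
      rw [h2]
      have hd : (0:ℝ) ≤ dist w w' := dist_nonneg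
      have hw : dist w.val w'.val ≤ dist w w' := le_of_eq (Subtype.dist_eq _ _).symm
      have hx : dist w.val.1 w'.val.1 ≤ dist w w' :=
        le_trans (le_trans (le_max_left _ _) (le_of_eq (Prod.dist_eq).symm)) hw
      have hy : dist w.val.2 w'.val.2 ≤ dist w w' :=
        le_trans (le_trans (le_max_right _ _) (le_of_eq (Prod.dist_eq).symm)) hw
      have hg : |1 / h w.val.1 - 1 / h w'.val.1| ≤ dist w w' := (hglip _ _).trans hx
      refine le_trans (le_of_eq (Prod.dist_eq)) (max_le ?_ ?_)
      · show dist (⟨(w.val.1, c + 1 / h w.val.1), hmem _⟩ : ↥(f ⁻¹' {c}))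
            ⟨(w'.val.1, c + 1 / h w'.val.1), hmem _⟩ ≤ 2 * dist w w'
        rw [Subtype.dist_eq]
        refine le_trans (le_of_eq (Prod.dist_eq)) (max_le ?_ ?_)
        · show dist w.val.1 w'.val.1 ≤ 2 * dist w w'
          nlinarith
        · show dist (c + 1 / h w.val.1) (c + 1 / h w'.val.1) ≤ 2 * dist w w'
          rw [Real.dist_eq]
          calc |c + 1/h w.val.1 - (c + 1/h w'.val.1)| = |1/h w.val.1 - 1/h w'.val.1| := by ring_nf
            _ ≤ dist w w' := hg
            _ ≤ 2 * dist w w' := by nlinarith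
      · show dist (f w.val) (f w'.val) ≤ 2 * dist w w'
        rw [Real.dist_eq, hfval, hfval]
        calc |(w.val.2 - 1/h w.val.1) - (w'.val.2 - 1/h w'.val.1)|
            ≤ |w.val.2 - w'.val.2| + |1/h w.val.1 - 1/h w'.val.1| := aux_tri16 _ _ _ _
          _ ≤ dist w w' + dist w w' := add_le_add (Real.dist_eq _ _ ▸ hy) hg
          _ = 2 * dist w w' := by ring
    · intro z
      show f (z.1.val.1, (z.2 : ℝ) + 1 / h z.1.val.1) = (z.2 : ℝ)
      rw [hf]; ring
end

section
/- Let f : ℝⁿ → ℝ be f(x, y) = y − 1/h(x) with h(x) = 1 + Σ x_i², n ≥ 2. Then f is not proper at any value c ∈ ℝ (every level is unbounded and f⁻¹ of any neighbourhood of c is unbounded and closed but not compact), and there is no nonzero vector v ∈ ℝⁿ such that the directional derivative ∂_v f vanishes identically; in particular f cannot be written as g ∘ π for any function g : ℝ^m → ℝ and surjective linear projection π : ℝⁿ → ℝ^m with m < n. -/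
/-!
The fibre `f = c` is the graph of `x ↦ c + 1/h(x)` over the whole `x`-space, hence not compact,
so `f` is proper at no value. If `f` were invariant under translation by `v = (u, s)`, comparing
`f(v)`, `f(0) = -1` and `f(-v)` gives `s - 1/h(u) = -1 = -s - 1/h(u)`, so `s = 0` and `h(u) = 1`,
i.e. `v = 0`. A direction along which the derivative vanishes identically, or a nonzero vector
in the kernel of a projection to a lower-dimensional space, would give such an invariance.
-/

open Set

lemma not_isCompact_preimage_singleton_of_forall_exists {X Y Z : Type*} [TopologicalSpace X]
    [NoncompactSpace X] [TopologicalSpace Y] {f : X × Y → Z} {c : Z}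
    (hf : ∀ x, ∃ y, f (x, y) = c) : ¬ IsCompact (f ⁻¹' {c}) := by
  intro hK
  have hfst : Prod.fst '' (f ⁻¹' {c}) = univ :=
    eq_univ_of_forall fun x => let ⟨y, hy⟩ := hf x; ⟨(x, y), hy, rfl⟩
  exact noncompact_univ X (hfst ▸ hK.image continuous_fst)

lemma add_eq_of_forall_fderiv_apply_eq_zero {𝕜 E F : Type*} [RCLike 𝕜] [NormedAddCommGroup E]
    [NormedSpace 𝕜 E] [NormedAddCommGroup F] [NormedSpace 𝕜 F] {f : E → F}
    (hf : Differentiable 𝕜 f) {v : E} (hv : ∀ z, fderiv 𝕜 f z v = 0) (z : E) :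
    f (z + v) = f z := by
  have hline (t : 𝕜) : HasDerivAt (fun t : 𝕜 => f (z + t • v)) 0 t := by
    simpa [hv, Function.comp_def] using (hf (z + t • v)).hasFDerivAt.comp_hasDerivAt t
      (((hasDerivAt_id t).smul_const v).const_add z)
  simpa using is_const_of_deriv_eq_zero (fun t => (hline t).differentiableAt)
    (fun t => (hline t).deriv) 1 0

section SndSubInvOneAddNormSq

variable {E : Type*} [NormedAddCommGroup E] {f : E × ℝ → ℝ}

lemma not_isCompact_preimage_singleton_of_eq_snd_sub_inv [NormedSpace ℝ E] [Nontrivial E]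
    (hf : ∀ x y, f (x, y) = y - (1 + ‖x‖ ^ 2)⁻¹) (c : ℝ) : ¬ IsCompact (f ⁻¹' {c}) :=
  not_isCompact_preimage_singleton_of_forall_exists fun x =>
    ⟨c + (1 + ‖x‖ ^ 2)⁻¹, by rw [hf, add_sub_cancel_right]⟩

lemma differentiable_of_eq_snd_sub_inv [InnerProductSpace ℝ E]
    (hf : ∀ x y, f (x, y) = y - (1 + ‖x‖ ^ 2)⁻¹) : Differentiable ℝ f := by
  have hf' : f = fun p => p.2 - (1 + ‖p.1‖ ^ 2)⁻¹ := funext fun p => hf p.1 p.2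
  rw [hf']
  exact differentiable_snd.sub <| ((differentiable_fst.norm_sq ℝ).const_add 1).inv fun p => by
    positivity

lemma eq_zero_of_forall_add_eq_of_eq_snd_sub_inv
    (hf : ∀ x y, f (x, y) = y - (1 + ‖x‖ ^ 2)⁻¹) {v : E × ℝ} (hv : ∀ z, f (z + v) = f z) :
    v = 0 := by
  obtain ⟨u, s⟩ := v
  have hpos := hv 0
  have hneg := hv (-(u, s))
  norm_num [hf] at hpos hneg
  have hs : s = 0 := by linarith
  have hu : u = 0 := by
    have : (1 + ‖u‖ ^ 2)⁻¹ = 1 := by linarith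
    simpa using this
  simp [hs, hu]

end SndSubInvOneAddNormSq

/-- f(x,y) = y − 1/h(x), h(x) = 1 + Σ xᵢ², is proper at no value c; no
nonzero direction v makes the directional derivative ∂ᵥf vanish identically; and f is
not of the form g ∘ π for a surjective linear projection π onto a space of strictly
smaller dimension. -/
theorem stmt_17 {m : ℕ} (hm : 1 ≤ m)
    (h : EuclideanSpace ℝ (Fin m) → ℝ)
    (hh : ∀ x, h x = 1 + ∑ i, (x i) ^ 2)
    (f : EuclideanSpace ℝ (Fin m) × ℝ → ℝ)
    (hf : ∀ (x : EuclideanSpace ℝ (Fin m)) (y : ℝ), f (x, y) = y - 1 / h x) :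
    (∀ c : ℝ, ¬ ∃ V : Set ℝ, V ∈ nhds c ∧
      ∀ K : Set ℝ, K ⊆ V → IsCompact K → IsCompact (f ⁻¹' K)) ∧
    (¬ ∃ v : EuclideanSpace ℝ (Fin m) × ℝ, v ≠ 0 ∧
      ∀ z : EuclideanSpace ℝ (Fin m) × ℝ, fderiv ℝ f z v = 0) ∧
    (¬ ∃ (k : ℕ) (_ : k < m + 1) (g : EuclideanSpace ℝ (Fin k) → ℝ)
      (π : (EuclideanSpace ℝ (Fin m) × ℝ) →ₗ[ℝ] EuclideanSpace ℝ (Fin k)),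
      Function.Surjective π ∧ f = g ∘ π) := by
  have : Nonempty (Fin m) := ⟨⟨0, hm⟩⟩
  have hf_norm (x : EuclideanSpace ℝ (Fin m)) (y : ℝ) : f (x, y) = y - (1 + ‖x‖ ^ 2)⁻¹ := by
    rw [hf, hh, EuclideanSpace.real_norm_sq_eq, one_div]
  refine ⟨?_, ?_, ?_⟩
  · rintro c ⟨V, hV, hproper⟩
    exact not_isCompact_preimage_singleton_of_eq_snd_sub_inv hf_norm c <|
      hproper {c} (singleton_subset_iff.2 (mem_of_mem_nhds hV)) isCompact_singleton
  · rintro ⟨v, hv0, hv⟩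
    exact hv0 <| eq_zero_of_forall_add_eq_of_eq_snd_sub_inv hf_norm <|
      add_eq_of_forall_fderiv_apply_eq_zero (differentiable_of_eq_snd_sub_inv hf_norm) hv
  · rintro ⟨k, hk, g, π, -, rfl⟩
    obtain ⟨v, hvπ, hv0⟩ := Submodule.exists_mem_ne_zero_of_ne_bot <|
      π.ker_ne_bot_of_finrank_lt (by simpa using hk)
    exact hv0 <| eq_zero_of_forall_add_eq_of_eq_snd_sub_inv hf_norm fun z => by
      simp [LinearMap.mem_ker.mp hvπ]
end

section
/- Let f : ℝ³ → ℝ be the polynomial f(x,y,z) = x⁴y² + x²y⁴ − 3x²y² + 1 (independent of z, the suspension of the Motzkin polynomial shifted by 1). Then for every pair of values 0 < s < t, the distance between the level sets f⁻¹(1+s) and f⁻¹(1+t) is zero; that is, inf{‖p − q‖ : f(p) = 1+s, f(q) = 1+t} = 0. Consequently no value in (1, ∞) satisfies the tube condition T_δ(f⁻¹(c)) ⊆ f⁻¹(𝒱) for levels contained in small neighbourhoods, and no value in (1, ∞) is a Lipschitz trivial value of f. -/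
lemma close_levels
    (f : ℝ × ℝ × ℝ → ℝ)
    (hf : ∀ x y z : ℝ, f (x, y, z) =
      x ^ 4 * y ^ 2 + x ^ 2 * y ^ 4 - 3 * x ^ 2 * y ^ 2 + 1) :
    ∀ s t : ℝ, 0 < s → s < t → ∀ ε > (0 : ℝ),
      ∃ a b : ℝ × ℝ × ℝ, f a = 1 + s ∧ f b = 1 + t ∧ ‖a - b‖ < ε := by
  intro s t hs hst ε hε
  set x : ℝ := max 2 (Real.sqrt (t / ε ^ 2) + 1) with hxdef
  have hx2 : (2 : ℝ) ≤ x := le_max_left _ _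
  have hx4 : (4 : ℝ) ≤ x ^ 2 := by nlinarith
  have ht0 : (0:ℝ) < t := hs.trans hst
  have htε : 0 ≤ t / ε ^ 2 := div_nonneg ht0.le (sq_nonneg ε)
  have hxt : t / ε ^ 2 < x ^ 2 := by
    have h1 : Real.sqrt (t / ε ^ 2) + 1 ≤ x := le_max_right _ _
    have h2 : 0 ≤ Real.sqrt (t / ε ^ 2) := Real.sqrt_nonneg _
    nlinarith [Real.sq_sqrt htε]
  set h : ℝ → ℝ := fun y => x ^ 2 * y ^ 2 * (x ^ 2 + y ^ 2 - 3) with hhdef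
  have hcont : Continuous h := by fun_prop
  set Y : ℝ := max 1 t with hYdef
  have hY1 : (1 : ℝ) ≤ Y := le_max_left _ _
  have hYt : t ≤ Y := le_max_right _ _
  have hhY : t ≤ h Y := by
    simp only [hhdef]
    have hY2 : Y ≤ Y ^ 2 := by nlinarith
    have h3 : (2:ℝ) ≤ x ^ 2 + Y ^ 2 - 3 := by nlinarith
    nlinarith [mul_le_mul_of_nonneg_left h3 (mul_nonneg (sq_nonneg x) (sq_nonneg Y)),
      sq_nonneg Y, mul_nonneg (sq_nonneg x) (sq_nonneg Y)]
  have h0Y : (0 : ℝ) ≤ Y := by linarith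
  have ivt := intermediate_value_Icc h0Y hcont.continuousOn
  have hs_mem : s ∈ Set.Icc (h 0) (h Y) := by
    constructor
    · simp [hhdef]; linarith
    · linarith
  have ht_mem : t ∈ Set.Icc (h 0) (h Y) := by
    constructor
    · simp [hhdef]; linarith
    · linarith
  obtain ⟨ys, hysI, hys⟩ := ivt hs_mem
  obtain ⟨yt, hytI, hyt⟩ := ivt ht_mem
  -- bounds: ys, yt < ε
  have key : ∀ y : ℝ, y ∈ Set.Icc (0:ℝ) Y → h y ≤ t → y < ε := by
    intro y hyI hyle
    have hy0 : 0 ≤ y := hyI.1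
    have h1 : x ^ 2 * y ^ 2 ≤ t := by
      simp only [hhdef] at hyle
      nlinarith [sq_nonneg y, sq_nonneg (x*y)]
    have h2 : y ^ 2 < ε ^ 2 := by
      by_contra hcon
      push_neg at hcon
      have heq : t / ε ^ 2 * ε ^ 2 = t := by field_simp
      nlinarith [sq_nonneg x, mul_pos hε hε]
    nlinarith
  have hysε : ys < ε := key ys hysI (by rw [hys]; linarith)
  have hytε : yt < ε := key yt hytI (by rw [hyt])
  refine ⟨(x, ys, 0), (x, yt, 0), ?_, ?_, ?_⟩
  · rw [hf]
    simp only [hhdef] at hys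
    linear_combination hys
  · rw [hf]
    simp only [hhdef] at hyt
    linear_combination hyt
  · have hab : ((x, ys, (0:ℝ)) : ℝ × ℝ × ℝ) - (x, yt, 0) = (0, ys - yt, 0) := by
      simp [Prod.ext_iff]
    rw [hab]
    have hn : ‖((0, ys - yt, 0) : ℝ × ℝ × ℝ)‖ = |ys - yt| := by
      simp [Prod.norm_def, Real.norm_eq_abs, abs_nonneg]
    rw [hn, abs_sub_lt_iff]
    constructor <;> linarith [hysI.1, hytI.1]

/-- for the suspension f(x,y,z) = x⁴y² + x²y⁴ − 3x²y² + 1 of the Motzkin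
polynomial, distinct level sets of levels 1+s and 1+t (0 < s < t) are at distance zero
from each other, and no value c ∈ (1, ∞) is a Lipschitz trivial value of f. -/
theorem stmt_18
    (f : ℝ × ℝ × ℝ → ℝ)
    (hf : ∀ x y z : ℝ, f (x, y, z) =
      x ^ 4 * y ^ 2 + x ^ 2 * y ^ 4 - 3 * x ^ 2 * y ^ 2 + 1) :
    (∀ s t : ℝ, 0 < s → s < t → ∀ ε > (0 : ℝ),
      ∃ a b : ℝ × ℝ × ℝ, f a = 1 + s ∧ f b = 1 + t ∧ ‖a - b‖ < ε) ∧
    (∀ c : ℝ, 1 < c → ¬ LipTrivAt f c) := by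
  refine ⟨close_levels f hf, ?_⟩
  rintro c hc ⟨V, hV, hcV, H, K, K', hK, hK', hproj⟩
  obtain ⟨η, hη, hball⟩ := Metric.isOpen_iff.mp hV c hcV
  set v₂ : ℝ := c + η / 2 with hv₂def
  have hv₂V : v₂ ∈ V := by
    apply hball
    rw [Metric.mem_ball, Real.dist_eq]
    rw [hv₂def]
    rw [abs_of_nonneg (by linarith)]; linarith
  set ε : ℝ := (η / 2) / ((K' : ℝ) + 1) with hεdef
  have hK'0 : (0 : ℝ) ≤ (K' : ℝ) := K'.coe_nonneg
  have hε : 0 < ε := by positivity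
  obtain ⟨a, b, ha, hb, hab⟩ := close_levels f hf (c - 1) (c - 1 + η / 2)
    (by linarith) (by linarith) ε hε
  have hfa : f a = c := by rw [ha]; ring
  have hfb : f b = v₂ := by rw [hb, hv₂def]; ring
  have haV : a ∈ f ⁻¹' V := by simp [Set.mem_preimage, hfa, hcV]
  have hbV : b ∈ f ⁻¹' V := by simp [Set.mem_preimage, hfb, hv₂V]
  set A : ↥(f ⁻¹' V) := ⟨a, haV⟩ with hAdef
  set B : ↥(f ⁻¹' V) := ⟨b, hbV⟩ with hBdef
  have h2a : ((H.symm A).2 : ℝ) = c := by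
    have := hproj (H.symm A)
    rwa [H.apply_symm_apply, hAdef, hfa, eq_comm] at this
  have h2b : ((H.symm B).2 : ℝ) = v₂ := by
    have := hproj (H.symm B)
    rwa [H.apply_symm_apply, hBdef, hfb, eq_comm] at this
  have hd1 : dist (H.symm A) (H.symm B) ≤ (K' : ℝ) * dist A B := hK'.dist_le_mul A B
  have hd2 : dist ((H.symm A).2) ((H.symm B).2) ≤ dist (H.symm A) (H.symm B) :=
    by rw [Prod.dist_eq]; exact le_max_right _ _
  have hd3 : dist ((H.symm A).2) ((H.symm B).2) = η / 2 := by
    rw [Subtype.dist_eq, h2a, h2b, Real.dist_eq, hv₂def]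
    rw [abs_of_nonpos (by linarith)]
    ring
  have hd4 : dist A B < ε := by
    rw [Subtype.dist_eq, dist_eq_norm]
    exact hab
  have : η / 2 ≤ (K' : ℝ) * ε := by
    calc η / 2 = dist ((H.symm A).2) ((H.symm B).2) := hd3.symm
    _ ≤ (K' : ℝ) * dist A B := hd2.trans hd1
    _ ≤ (K' : ℝ) * ε := by nlinarith
  rw [hεdef] at this
  have hlt : (K' : ℝ) * ((η / 2) / ((K' : ℝ) + 1)) < η / 2 := by
    rw [mul_div_assoc']
    rw [div_lt_iff₀ (by linarith)]
    nlinarith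
  linarith
end
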